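/- arXiv:2101.01245 — 2 statements merged into one kernel-verified Lean document; each statement's English description precedes it below -/
import Mathlib

section
/- Let G₁* be the class of functions f_{c,h} : ℝ → ℝ given by f_{c,h}(x) = 1{c ≤ x < c+h} · (x−c)/h, indexed by c ∈ ℝ and h > 0 (each f_{c,h} is the line from (c,0) to (c+h,1) supported on [c, c+h)). Then no 4-point subset of ℝ × ℝ is shattered by the class of subgraphs of G₁*; i.e., G₁* is a VC-subgraph class with VC index at most 4. -/
/-!
Left of `c + h`, membership of `(x, t)` in the subgraph of `f_{c,h}` is a half-plane condition
on the parameters `(c, h)`: `c + t h ≤ x` if `t > 0`, `x ≤ c` if `t < 0`, none if `t = 0`.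
Let `w` be a point of largest abscissa and put it in the subgraph exactly when its ordinate is
positive; any `(c, h)` realising such a labelling has `w.1 < c + h`, so the other three points
are in the half-plane regime. The `(constant, c)`-parts of their three affine functionals are
linearly dependent in `ℝ²`, so a nontrivial combination of the functionals equals `k h`, whose
sign (as `h > 0`) is that of `k`; this forbids the sign pattern opposite to the coefficients.
-/

/-- The subgraph of a function `f : ℝ → ℝ`:
`{(x,t) : t ≤ f(x) ≤ 0 or 0 ≤ t ≤ f(x)}`. -/
def subgraph (f : ℝ → ℝ) : Set (ℝ × ℝ) :=
  {p | (p.2 ≤ f p.1 ∧ f p.1 ≤ 0) ∨ (0 ≤ p.2 ∧ p.2 ≤ f p.1)}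

/-- The ramp function `f_{c,h}(x) = 1{c ≤ x < c+h} · (x−c)/h`, the line from
`(c,0)` to `(c+h,1)` supported on `[c, c+h)`. -/
noncomputable def rampFn (c h : ℝ) : ℝ → ℝ :=
  fun x => if c ≤ x ∧ x < c + h then (x - c) / h else 0

open Finset

section SignPattern

variable {ι : Type*} [Fintype ι]

lemma mul_nonpos_of_nonneg_iff_neg {m y : ℝ} (h : 0 ≤ y ↔ m < 0) : m * y ≤ 0 := by
  by_cases hm : m < 0
  · exact mul_nonpos_of_nonpos_of_nonneg hm.le (h.2 hm)
  · exact mul_nonpos_of_nonneg_of_nonpos (not_lt.1 hm) (not_le.1 (mt h.1 hm)).le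

lemma sum_mul_nonpos_of_forall_nonneg_iff_neg {μ g : ι → ℝ} (hg : ∀ i, 0 ≤ g i ↔ μ i < 0) :
    ∑ i, μ i * g i ≤ 0 :=
  sum_nonpos fun i _ => mul_nonpos_of_nonneg_iff_neg (hg i)

lemma sum_mul_neg_of_forall_nonneg_iff_neg {μ g : ι → ℝ} (hg : ∀ i, 0 ≤ g i ↔ μ i < 0)
    (hμ : ∃ i, 0 < μ i) : ∑ i, μ i * g i < 0 := by
  obtain ⟨j, hj⟩ := hμ
  have hgj : g j < 0 := not_le.1 fun h => hj.not_gt ((hg j).1 h)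
  calc ∑ i, μ i * g i < ∑ _i : ι, (0 : ℝ) :=
        sum_lt_sum (fun i _ => mul_nonpos_of_nonneg_iff_neg (hg i))
          ⟨j, mem_univ j, mul_neg_of_pos_of_neg hj hgj⟩
    _ = 0 := sum_const_zero

lemma exists_sign_pattern_not_realized_of_sign_sum (μ : ι → ℝ) (hμ : μ ≠ 0) (k : ℝ) :
    ∃ s : ι → Prop, ∀ g : ι → ℝ,
      SignType.sign (∑ i, μ i * g i) = SignType.sign k → ¬ ∀ i, (0 ≤ g i ↔ s i) := by
  wlog hk : 0 < k ∨ (k = 0 ∧ ∃ i, 0 < μ i) generalizing μ k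
  · have hk' : 0 < -k ∨ (-k = 0 ∧ ∃ i, 0 < (-μ) i) := by
      push Not at hk
      rcases hk.1.lt_or_eq with hneg | rfl
      · exact Or.inl (neg_pos.2 hneg)
      · obtain ⟨i, hi⟩ := Function.ne_iff.1 hμ
        exact Or.inr ⟨neg_zero, i, neg_pos.2 ((hk.2 rfl i).lt_of_ne hi)⟩
    obtain ⟨s, hs⟩ := this (-μ) (neg_ne_zero.2 hμ) (-k) hk'
    refine ⟨s, fun g hg => hs g ?_⟩
    simp only [Pi.neg_apply, neg_mul, sum_neg_distrib, Left.sign_neg, hg]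
  refine ⟨fun i => μ i < 0, fun g hsign hg => ?_⟩
  rcases hk with hk | ⟨rfl, hpos⟩
  · rw [sign_pos hk, sign_eq_one_iff] at hsign
    linarith [sum_mul_nonpos_of_forall_nonneg_iff_neg hg]
  · rw [sign_zero, sign_eq_zero_iff] at hsign
    linarith [sum_mul_neg_of_forall_nonneg_iff_neg hg hpos]

theorem exists_sign_pattern_not_realized_on_upper_half_plane (hι : 2 < Fintype.card ι)
    (α β γ : ι → ℝ) :
    ∃ s : ι → Prop, ∀ c h : ℝ, 0 < h → ¬ ∀ i, (0 ≤ α i + β i * c + γ i * h ↔ s i) := by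
  have hdep : ¬ LinearIndependent ℝ fun i => (α i, β i) := fun hli => by
    have := hli.fintype_card_le_finrank
    simp only [Module.finrank_prod, Module.finrank_self] at this
    omega
  obtain ⟨μ, hsum, i, hi⟩ := Fintype.not_linearIndependent_iff.1 hdep
  have hα : ∑ i, μ i * α i = 0 := by simpa [Prod.fst_sum] using congrArg Prod.fst hsum
  have hβ : ∑ i, μ i * β i = 0 := by simpa [Prod.snd_sum] using congrArg Prod.snd hsum
  obtain ⟨s, hs⟩ := exists_sign_pattern_not_realized_of_sign_sum μ (Function.ne_iff.2 ⟨i, hi⟩)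
    (∑ i, μ i * γ i)
  refine ⟨s, fun c h hh => hs _ ?_⟩
  have hcomb : ∑ i, μ i * (α i + β i * c + γ i * h) = (∑ i, μ i * γ i) * h := by
    simp only [mul_add, sum_add_distrib, ← mul_assoc, ← sum_mul, hα, hβ]
    ring
  rw [hcomb, sign_mul, sign_pos hh, mul_one]

end SignPattern

section Subgraph

variable {f : ℝ → ℝ} {p : ℝ × ℝ}

lemma mem_subgraph_iff_of_nonneg (ht : 0 ≤ p.2) :
    p ∈ subgraph f ↔ p.2 ≤ f p.1 := by
  simp only [subgraph, Set.mem_ofPred_eq]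
  constructor
  · rintro (⟨h, -⟩ | ⟨-, h⟩) <;> exact h
  · exact fun h => Or.inr ⟨ht, h⟩

lemma mem_subgraph_iff_of_neg (hf : 0 ≤ f p.1) (ht : p.2 < 0) :
    p ∈ subgraph f ↔ f p.1 = 0 := by
  simp only [subgraph, Set.mem_ofPred_eq]
  constructor
  · rintro (⟨-, h⟩ | ⟨h, -⟩)
    · exact le_antisymm h hf
    · exact absurd h (not_le.2 ht)
  · exact fun h => Or.inl ⟨h ▸ ht.le, h.le⟩

end Subgraph

section Ramp

variable {c h x t : ℝ} {p : ℝ × ℝ}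

lemma rampFn_nonneg (c h x : ℝ) : 0 ≤ rampFn c h x := by
  unfold rampFn
  split_ifs with hx
  · exact div_nonneg (sub_nonneg.2 hx.1) (by linarith [hx.1, hx.2])
  · exact le_rfl

lemma mem_subgraph_rampFn_of_snd_eq_zero (ht : p.2 = 0) : p ∈ subgraph (rampFn c h) :=
  (mem_subgraph_iff_of_nonneg ht.ge).2 (ht ▸ rampFn_nonneg c h p.1)

lemma rampFn_eq_zero_iff (hh : 0 < h) : rampFn c h x = 0 ↔ x ≤ c ∨ c + h ≤ x := by
  unfold rampFn
  split_ifs with hx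
  · rw [div_eq_zero_iff, sub_eq_zero]
    constructor
    · rintro (hxc | h0)
      · exact Or.inl hxc.le
      · exact absurd h0 hh.ne'
    · rintro (hxc | hxh)
      · exact Or.inl (le_antisymm hxc hx.1)
      · exact absurd hx.2 (not_lt.2 hxh)
  · simp only [true_iff]
    by_contra! hx'
    exact hx ⟨hx'.1.le, hx'.2⟩

lemma le_rampFn_iff (hh : 0 < h) (ht : 0 < t) :
    t ≤ rampFn c h x ↔ c + t * h ≤ x ∧ x < c + h := by
  unfold rampFn
  split_ifs with hx
  · rw [le_div_iff₀ hh]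
    exact ⟨fun h' => ⟨by linarith, hx.2⟩, fun h' => by linarith [h'.1]⟩
  · refine ⟨fun h' => absurd h' (not_le.2 ht), fun h' => absurd ⟨?_, h'.2⟩ hx⟩
    linarith [h'.1, mul_pos ht hh]

lemma lt_add_of_mem_subgraph_rampFn_iff (hh : 0 < h) (hp : p ∈ subgraph (rampFn c h) ↔ 0 < p.2) :
    p.1 < c + h := by
  rcases lt_trichotomy p.2 0 with ht | ht | ht
  · have hne : rampFn c h p.1 ≠ 0 := fun h0 =>
      ht.not_gt (hp.1 ((mem_subgraph_iff_of_neg (rampFn_nonneg c h _) ht).2 h0))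
    rw [Ne, rampFn_eq_zero_iff hh] at hne
    push Not at hne
    exact hne.2
  · exact ((hp.1 (mem_subgraph_rampFn_of_snd_eq_zero ht)).ne' ht).elim
  · exact ((le_rampFn_iff hh ht).1 ((mem_subgraph_iff_of_nonneg ht.le).1
      (hp.2 ht))).2

lemma mem_subgraph_rampFn_iff_of_lt (hh : 0 < h) (hx : p.1 < c + h) :
    p ∈ subgraph (rampFn c h) ↔
      0 ≤ (SignType.sign p.2 : ℝ) * (p.1 - c - max p.2 0 * h) := by
  rcases lt_trichotomy p.2 0 with ht | ht | ht
  · rw [mem_subgraph_iff_of_neg (rampFn_nonneg c h _) ht, rampFn_eq_zero_iff hh, sign_neg ht,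
      max_eq_right ht.le]
    simp only [SignType.coe_neg_one, zero_mul, sub_zero, neg_one_mul, neg_nonneg, sub_nonpos]
    exact or_iff_left (not_le.2 hx)
  · simp only [ht, sign_zero, SignType.coe_zero, zero_mul, le_refl, iff_true]
    exact mem_subgraph_rampFn_of_snd_eq_zero ht
  · rw [mem_subgraph_iff_of_nonneg ht.le, le_rampFn_iff hh ht, sign_pos ht,
      max_eq_left ht.le, SignType.coe_one, one_mul, and_iff_left hx]
    constructor <;> intro h' <;> linarith

end Ramp

/-- The class `G₁* = {f_{c,h} : c ∈ ℝ, h > 0}` of ramp functions is a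
VC-subgraph class with index at most 4: no 4-point subset of `ℝ × ℝ` is shattered
by the subgraphs of `G₁*`. -/
theorem rampFn_subgraphs_not_shatter_four_points :
    ∀ D : Finset (ℝ × ℝ), D.card = 4 →
      ¬ (∀ E : Finset (ℝ × ℝ), E ⊆ D →
          ∃ c h : ℝ, 0 < h ∧ subgraph (rampFn c h) ∩ ↑D = (↑E : Set (ℝ × ℝ))) := by
  classical
  intro D hD hshatter
  have realize : ∀ P : ℝ × ℝ → Prop, ∃ c h : ℝ, 0 < h ∧
      ∀ p ∈ D, (p ∈ subgraph (rampFn c h) ↔ P p) := fun P => by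
    obtain ⟨c, h, hh, hE⟩ := hshatter (D.filter P) (filter_subset _ _)
    exact ⟨c, h, hh, fun p hp => by simpa [hp] using Set.ext_iff.1 hE p⟩
  obtain ⟨w, hw, hw_max⟩ := D.exists_max_image Prod.fst (card_pos.1 (by omega))
  set T := D.erase w
  have hT : 2 < Fintype.card T := by simp [T, card_erase_of_mem hw, hD]
  set σ : T → ℝ := fun p => SignType.sign p.1.2
  obtain ⟨s, hs⟩ := exists_sign_pattern_not_realized_on_upper_half_plane hT
    (fun p => σ p * p.1.1) (fun p => -σ p) (fun p => -(σ p * max p.1.2 0))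
  obtain ⟨c, h, hh, hmem⟩ := realize fun p => if hp : p ∈ T then s ⟨p, hp⟩ else 0 < p.2
  have hw_lt : w.1 < c + h :=
    lt_add_of_mem_subgraph_rampFn_iff hh (by simpa [T] using hmem w hw)
  refine hs c h hh fun p => ?_
  have hp_lt : p.1.1 < c + h := (hw_max p.1 (mem_of_mem_erase p.2)).trans_lt hw_lt
  have hcoeff : σ p * p.1.1 + -σ p * c + -(σ p * max p.1.2 0) * h =
      σ p * (p.1.1 - c - max p.1.2 0 * h) := by ring
  rw [hcoeff, ← mem_subgraph_rampFn_iff_of_lt hh hp_lt, hmem p.1 (mem_of_mem_erase p.2),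
    dif_pos p.2]
end

section
/- Let k : ℝ → ℝ be a bounded kernel with support in [−1,1], and for a bandwidth h > 0 and point c define the scaled kernel weight ω(x) = (1/h)·k((x−c)/h)·1{c ≤ x < c+h}·((x−c)/h)^l for a nonnegative integer l. If f : ℝ → ℝ is a probability density that is continuously differentiable with |f'| ≤ M on a neighborhood of c, then | (1/h)·E[k((X−c)/h)·((X−c)/h)^l·1{c ≤ X < c+h}] − f(c)·γ_l | ≤ M'·h, where γ_l = ∫₀¹ k(u)·u^l du, X has density f, and M' depends only on M and k. -/
/-!
Substituting `x = c + u h` turns `h⁻¹ ∫_{[c,c+h)} k((x-c)/h) ((x-c)/h)^l f(x) dx` into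
`∫₀¹ k(u) u^l f(c + u h) du`, so the bias is `∫₀¹ k(u) u^l (f(c + u h) - f(c)) du`.
By the mean value theorem `|f(c + u h) - f(c)| ≤ M h` for `u ∈ [0,1]`, and `|k(u) u^l| ≤ sup |k|`
there, whence the bound `sup |k| · M · h`.
-/

open MeasureTheory Set intervalIntegral

lemma intervalIntegrable_of_norm_le {E : Type*} [NormedAddCommGroup E] {k : ℝ → E}
    (hk : AEStronglyMeasurable k volume) {B : ℝ} (hB : ∀ u, ‖k u‖ ≤ B) (a b : ℝ) :
    IntervalIntegrable k volume a b :=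
  ⟨Measure.integrableOn_of_bounded measure_Ioc_lt_top.ne hk (ae_of_all _ hB),
    Measure.integrableOn_of_bounded measure_Ioc_lt_top.ne hk (ae_of_all _ hB)⟩

lemma setIntegral_Ico_eq_smul_integral_comp {E : Type*} [NormedAddCommGroup E]
    [NormedSpace ℝ E] (F : ℝ → E) {c h : ℝ} (hh : 0 < h) :
    ∫ x in Ico c (c + h), F x = h • ∫ u in (0 : ℝ)..1, F (c + u * h) := by
  have hcomp := integral_comp_mul_add (f := F) (a := 0) (b := 1) hh.ne' c
  simp only [mul_zero, zero_add, mul_one] at hcomp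
  rw [← integral_Icc_eq_integral_Ico, integral_Icc_eq_integral_Ioc,
    ← integral_of_le (by linarith)]
  simp_rw [add_comm c (_ * h), mul_comm _ h, hcomp, smul_inv_smul₀ hh.ne', add_comm h c]

lemma abs_sub_left_le_of_hasDerivAt {f f' : ℝ → ℝ} {a b M : ℝ} (hM : 0 ≤ M)
    (hf : ∀ x ∈ Icc a b, HasDerivAt f (f' x) x) (hf' : ∀ x ∈ Icc a b, |f' x| ≤ M) :
    ∀ x ∈ Icc a b, |f x - f a| ≤ M * (b - a) := fun x hx =>
  calc |f x - f a| ≤ M * (x - a) :=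
        norm_image_sub_le_of_norm_deriv_le_segment' (fun y hy => (hf y hy).hasDerivWithinAt)
          (fun y hy => hf' y (Ico_subset_Icc_self hy)) x hx
    _ ≤ M * (b - a) := by gcongr; exact hx.2

lemma abs_integral_mul_sub_const_mul_integral_le {w g : ℝ → ℝ} {a b y B ε : ℝ} (hab : a ≤ b)
    (hw : IntervalIntegrable w volume a b) (hg : ContinuousOn g (Icc a b))
    (hwB : ∀ u ∈ Icc a b, |w u| ≤ B) (hgε : ∀ u ∈ Icc a b, |g u - y| ≤ ε) :
    |(∫ u in a..b, w u * g u) - y * ∫ u in a..b, w u| ≤ B * ε * (b - a) := by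
  rw [← intervalIntegral.integral_const_mul,
    ← integral_sub (hw.mul_continuousOn (uIcc_of_le hab ▸ hg)) (hw.const_mul y),
    ← abs_of_nonneg (sub_nonneg.2 hab)]
  have hdiff : ∀ u, w u * g u - y * w u = w u * (g u - y) := fun u => by ring
  simp_rw [hdiff]
  refine (Real.norm_eq_abs _).symm.trans_le <|
    intervalIntegral.norm_integral_le_of_norm_le_const fun u hu => ?_
  have hu' : u ∈ Icc a b := uIcc_of_le hab ▸ uIoc_subset_uIcc hu
  rw [Real.norm_eq_abs, abs_mul]
  exact mul_le_mul (hwB u hu') (hgε u hu') (abs_nonneg _) ((abs_nonneg _).trans (hwB u hu'))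

theorem kernel_boundary_bias_bound_general
    (k : ℝ → ℝ) (hkm : Measurable k) (Mk : ℝ) (hkb : ∀ u, |k u| ≤ Mk)
    (M : ℝ) (hM : 0 ≤ M) :
    ∃ M' : ℝ, ∀ (f f' : ℝ → ℝ) (c h : ℝ) (l : ℕ), 0 < h →
      (∀ x ∈ Set.Icc c (c + h), HasDerivAt f (f' x) x) →
      (∀ x ∈ Set.Icc c (c + h), |f' x| ≤ M) →
      |h⁻¹ * (∫ x in Set.Ico c (c + h), k ((x - c) / h) * ((x - c) / h) ^ l * f x)
          - f c * ∫ u in (0:ℝ)..1, k u * u ^ l| ≤ M' * h := by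
  refine ⟨Mk * M, fun f f' c h l hh hf hf' => ?_⟩
  have hrescale : ∀ u ∈ Icc (0 : ℝ) 1, c + u * h ∈ Icc c (c + h) := fun u hu =>
    ⟨by nlinarith [hu.1], by nlinarith [hu.2]⟩
  have hw : IntervalIntegrable (fun u => k u * u ^ l) volume 0 1 :=
    (intervalIntegrable_of_norm_le hkm.aestronglyMeasurable hkb 0 1).mul_continuousOn
      (continuous_pow l).continuousOn
  have hg : ContinuousOn (fun u => f (c + u * h)) (Icc 0 1) :=
    ContinuousOn.comp (fun x hx => (hf x hx).continuousAt.continuousWithinAt)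
      (by fun_prop) hrescale
  have hwB : ∀ u ∈ Icc (0 : ℝ) 1, |k u * u ^ l| ≤ Mk := fun u hu => by
    rw [abs_mul, abs_pow, abs_of_nonneg hu.1]
    exact (mul_le_of_le_one_right (abs_nonneg _) (pow_le_one₀ hu.1 hu.2)).trans (hkb u)
  rw [setIntegral_Ico_eq_smul_integral_comp _ hh, smul_eq_mul, inv_mul_cancel_left₀ hh.ne']
  simp only [add_sub_cancel_left, mul_div_cancel_right₀ _ hh.ne']
  calc _ ≤ Mk * (M * h) * (1 - 0) :=
        abs_integral_mul_sub_const_mul_integral_le zero_le_one hw hg hwB fun u hu => by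
          simpa using abs_sub_left_le_of_hasDerivAt hM hf hf' _ (hrescale u hu)
    _ = Mk * M * h := by ring

/-- Boundary kernel-bias bound. Let `k` be a bounded measurable kernel
supported in `[−1,1]` and `γ_l = ∫₀¹ k(u)u^l du`. Then there is `M'` depending only on
the derivative bound `M` and on `k` such that for every density-like function `f`
differentiable on `[c, c+h]` with `|f'| ≤ M` there,
`| h⁻¹ ∫_{[c,c+h)} k((x−c)/h)·((x−c)/h)^l·f(x) dx − f(c)·γ_l | ≤ M'·h`. -/
theorem kernel_boundary_bias_bound
    (k : ℝ → ℝ) (hkm : Measurable k) (Mk : ℝ) (hkb : ∀ u, |k u| ≤ Mk)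
    (hsupp : ∀ u, u ∉ Set.Icc (-1 : ℝ) 1 → k u = 0)
    (M : ℝ) (hM : 0 ≤ M) :
    ∃ M' : ℝ, ∀ (f f' : ℝ → ℝ) (c h : ℝ) (l : ℕ), 0 < h →
      (∀ x ∈ Set.Icc c (c + h), HasDerivAt f (f' x) x) →
      (∀ x ∈ Set.Icc c (c + h), |f' x| ≤ M) →
      |h⁻¹ * (∫ x in Set.Ico c (c + h), k ((x - c) / h) * ((x - c) / h) ^ l * f x)
          - f c * ∫ u in (0:ℝ)..1, k u * u ^ l| ≤ M' * h :=
  kernel_boundary_bias_bound_general k hkm Mk hkb M hM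
end
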